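/- Soundness of the transformation rules: if G₁ ⤳ G₂ by one of the six rules — (1) oneNum_{1}(T₁) ⋆ oneNum_{2}(T₂) ⤳ oneNum_{1,2}(T₁ ⊛ T₂); (2) oneNum_{1}(T₁) ⋆ anyNum_{2}(T₂) ⤳ oneNum_{1,2}(T₁ ⊛ T₂) ⋆ anyNum_{2}(T₂); (3) anyNum_{1}(T₁) ⋆ oneNum_{2}(T₂) ⤳ anyNum_{1}(T₁) ⋆ oneNum_{1,2}(T₁ ⊛ T₂); (4) anyNum_{1}(T₁) ⋆ anyNum_{2}(T₂) ⤳ anyNum_{1}(T₁) ⋆ anyNum_{2}(T₂) ⋆ anyNum_{1,2}(T₁ ⊛ T₂); (5) anyNum_{1}(T) ⤳ empe; (6) anyNum_{2}(T) ⤳ empe, where rules (1)–(4) apply only when T₁ ⊛ T₂ is defined — then the implication G₂ ⟹ G₁ is valid, i.e. holds in every L′-environment. -/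
import Mathlib


/-- An environment (model with variable assignment): interprets unary predicate
symbols from `𝒜`, binary predicate symbols from `ℱ`, and variables from `V`
over the domain `D`. -/
structure Env (𝒜 ℱ V D : Type) where
  un : 𝒜 → D → Prop
  bin : ℱ → D → D → Prop
  var : V → D

variable {𝒜 ℱ V D : Type}

/-- `e.Split e₁ e₂`: the relations of `e` split as a disjoint union into `e₁`
and `e₂`, and the variable assignments agree with those of `e`. -/
def Env.Split (e e₁ e₂ : Env 𝒜 ℱ V D) : Prop :=
  e₁.var = e.var ∧ e₂.var = e.var ∧
  (∀ A d, (e.un A d ↔ (e₁.un A d ∨ e₂.un A d)) ∧ ¬(e₁.un A d ∧ e₂.un A d)) ∧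
  (∀ f d₁ d₂, (e.bin f d₁ d₂ ↔ (e₁.bin f d₁ d₂ ∨ e₂.bin f d₁ d₂)) ∧
      ¬(e₁.bin f d₁ d₂ ∧ e₂.bin f d₁ d₂))

/-- Spatial conjunction of predicates on environments. -/
def spand (P Q : Env 𝒜 ℱ V D → Prop) (e : Env 𝒜 ℱ V D) : Prop :=
  ∃ e₁ e₂, e.Split e₁ e₂ ∧ P e₁ ∧ Q e₂

/-! ## Syntax and semantics of first-order logic with counting quantifiers -/

/-- Counting quantifier specifications: `∃^{=k}` and `∃^{≥k}`. -/
inductive CQ : Type where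
  | exact : ℕ → CQ
  | atLeast : ℕ → CQ
deriving DecidableEq

/-- A counting quantifier specification is satisfied by a cardinality `c`. -/
def CQ.sat : CQ → ℕ → Prop
  | .exact k, c => c = k
  | .atLeast k, c => k ≤ c

/-- `c ∈ C_{k+1}`: `c` is `=i` for some `i ≤ k`, or `≥ k+1`. -/
def CQ.degLE (k : ℕ) : CQ → Prop
  | .exact i => i ≤ k
  | .atLeast i => i = k + 1

/-- Formulas of first-order predicate calculus with equality and counting
quantifiers, over unary symbols `𝒜`, binary symbols `ℱ`, variables `V`. -/
inductive Fml (𝒜 ℱ V : Type) : Type where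
  | un : 𝒜 → V → Fml 𝒜 ℱ V
  | bin : ℱ → V → V → Fml 𝒜 ℱ V
  | eq : V → V → Fml 𝒜 ℱ V
  | fls : Fml 𝒜 ℱ V
  | and : Fml 𝒜 ℱ V → Fml 𝒜 ℱ V → Fml 𝒜 ℱ V
  | or : Fml 𝒜 ℱ V → Fml 𝒜 ℱ V → Fml 𝒜 ℱ V
  | not : Fml 𝒜 ℱ V → Fml 𝒜 ℱ V
  | cnt : CQ → V → Fml 𝒜 ℱ V → Fml 𝒜 ℱ V

/-- Update the value of a variable in an environment. -/
def Env.updVar [DecidableEq V] (e : Env 𝒜 ℱ V D) (v : V) (d : D) : Env 𝒜 ℱ V D :=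
  { e with var := Function.update e.var v d }

/-- Satisfaction of a formula in an environment. -/
def Fml.Sat [DecidableEq V] : Fml 𝒜 ℱ V → Env 𝒜 ℱ V D → Prop
  | .un A v, e => e.un A (e.var v)
  | .bin f v w, e => e.bin f (e.var v) (e.var w)
  | .eq v w, e => e.var v = e.var w
  | .fls, _ => False
  | .and F G, e => F.Sat e ∧ G.Sat e
  | .or F G, e => F.Sat e ∨ G.Sat e
  | .not F, e => ¬ F.Sat e
  | .cnt c v F, e => c.sat {d : D | F.Sat (e.updVar v d)}.ncard

/-- Quantifier depth; each counting quantifier counts as one quantifier. -/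
def Fml.qdepth : Fml 𝒜 ℱ V → ℕ
  | .un _ _ => 0
  | .bin _ _ _ => 0
  | .eq _ _ => 0
  | .fls => 0
  | .and F G => max F.qdepth G.qdepth
  | .or F G => max F.qdepth G.qdepth
  | .not F => F.qdepth
  | .cnt _ _ F => F.qdepth + 1

/-- Free variables of a formula. -/
def Fml.fv [DecidableEq V] : Fml 𝒜 ℱ V → Finset V
  | .un _ v => {v}
  | .bin _ v w => {v, w}
  | .eq v w => {v, w}
  | .fls => ∅
  | .and F G => F.fv ∪ G.fv
  | .or F G => F.fv ∪ G.fv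
  | .not F => F.fv
  | .cnt _ v F => F.fv.erase v

/-- `F.DegLE k`: `F` has counting degree at most `k`, i.e. all counting
quantifiers of `F` are `∃^c` with `c ∈ C_{k+1}`. -/
def Fml.DegLE (k : ℕ) : Fml 𝒜 ℱ V → Prop
  | .un _ _ => True
  | .bin _ _ _ => True
  | .eq _ _ => True
  | .fls => True
  | .and F G => F.DegLE k ∧ G.DegLE k
  | .or F G => F.DegLE k ∧ G.DegLE k
  | .not F => F.DegLE k
  | .cnt c _ F => c.degLE k ∧ F.DegLE k

/-! ## Atomic formulas, complete atomic types -/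

/-- Atomic formulas over unary symbols `𝒜`, binary symbols `ℱ`, variables `V`
(including equality atoms). -/
inductive Atom (𝒜 ℱ V : Type) : Type where
  | un : 𝒜 → V → Atom 𝒜 ℱ V
  | bin : ℱ → V → V → Atom 𝒜 ℱ V
  | eq : V → V → Atom 𝒜 ℱ V
deriving DecidableEq

def Atom.toFml : Atom 𝒜 ℱ V → Fml 𝒜 ℱ V
  | .un A v => .un A v
  | .bin f v w => .bin f v w
  | .eq v w => .eq v w

/-- The variables occurring in an atomic formula. -/
def Atom.varset [DecidableEq V] : Atom 𝒜 ℱ V → Finset V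
  | .un _ v => {v}
  | .bin _ v w => {v, w}
  | .eq v w => {v, w}

/-- Whether an atom is an equality atom. -/
def Atom.isEq : Atom 𝒜 ℱ V → Bool
  | .eq _ _ => true
  | _ => false

def atomEquiv (𝒜 ℱ V : Type) :
    Atom 𝒜 ℱ V ≃ ((𝒜 × V) ⊕ ((ℱ × V × V) ⊕ (V × V))) where
  toFun a := match a with
    | .un A v => Sum.inl (A, v)
    | .bin f v w => Sum.inr (Sum.inl (f, v, w))
    | .eq v w => Sum.inr (Sum.inr (v, w))
  invFun s := match s with
    | Sum.inl (A, v) => .un A v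
    | Sum.inr (Sum.inl (f, v, w)) => .bin f v w
    | Sum.inr (Sum.inr (v, w)) => .eq v w
  left_inv a := by cases a <;> rfl
  right_inv s := by rcases s with ⟨A, v⟩ | ⟨f, v, w⟩ | ⟨v, w⟩ <;> rfl

instance [Fintype 𝒜] [Fintype ℱ] [Fintype V] : Fintype (Atom 𝒜 ℱ V) :=
  Fintype.ofEquiv _ (atomEquiv 𝒜 ℱ V).symm

/-- Conjunction of a list of formulas (empty conjunction is `¬⊥`, i.e. true). -/
def listConj (l : List (Fml 𝒜 ℱ V)) : Fml 𝒜 ℱ V := l.foldr .and (.not .fls)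

/-- Disjunction of a list of formulas (empty disjunction is `⊥`). -/
def listDisj (l : List (Fml 𝒜 ℱ V)) : Fml 𝒜 ℱ V := l.foldr .or .fls

/-- Conjunction of a list of atoms, each taken positively or negatively
according to the sign assignment `σ`. -/
def signedConj (l : List (Atom 𝒜 ℱ V)) (σ : Atom 𝒜 ℱ V → Bool) : Fml 𝒜 ℱ V :=
  listConj (l.map fun a => if σ a then a.toFml else .not a.toFml)

section AtomicTypes

variable [Fintype 𝒜] [DecidableEq 𝒜] [Fintype ℱ] [DecidableEq ℱ]
  [Fintype V] [DecidableEq V]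

/-- The list of all atomic formulas whose variables are among `xs`. -/
noncomputable def atomsOn (𝒜 ℱ : Type) [Fintype 𝒜] [DecidableEq 𝒜] [Fintype ℱ] [DecidableEq ℱ]
    {V : Type} [Fintype V] [DecidableEq V] (xs : Finset V) : List (Atom 𝒜 ℱ V) :=
  (Finset.univ : Finset (Atom 𝒜 ℱ V)).toList.filter fun a => decide (a.varset ⊆ xs)

/-- The complete atomic type (CAT) formula with free variables `{x₁,…,xₙ}`
(the whole of `V`) determined by a sign assignment `σ`: the conjunction
containing, for each atomic formula `C` over `V`, the conjunct `C` if
`σ C = true` and the conjunct `¬C` otherwise. -/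
noncomputable def catFml (σ : Atom 𝒜 ℱ V → Bool) : Fml 𝒜 ℱ V :=
  signedConj (Finset.univ : Finset (Atom 𝒜 ℱ V)).toList σ

/-- The CAT formula over the variable subset `xs` determined by `σ`. -/
noncomputable def gccatFml (xs : Finset V) (σ : Atom 𝒜 ℱ V → Bool) : Fml 𝒜 ℱ V :=
  signedConj (atomsOn 𝒜 ℱ xs) σ

/-- `σ` is a general-case CAT (GCCAT) sign assignment over the variables `xs`:
the conjunct `xᵢ = xⱼ` occurs (positively) iff `i = j`, and (canonically) `σ`
is `false` outside the atoms over `xs`. -/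
noncomputable def gccatSignB (xs : Finset V) (σ : Atom 𝒜 ℱ V → Bool) : Bool :=
  (xs.toList.all fun i => xs.toList.all fun j => σ (.eq i j) == decide (i = j)) &&
  ((Finset.univ : Finset (Atom 𝒜 ℱ V)).toList.all fun a =>
      decide (a.varset ⊆ xs) || !σ a)

/-- `a` is an atom of an `x`-extension: its variables are among `insert x xs`
and `x` actually occurs in it. -/
def isExtAtom (xs : Finset V) (x : V) (a : Atom 𝒜 ℱ V) : Bool :=
  decide (a.varset ⊆ insert x xs) && decide (x ∈ a.varset)

/-- The list of atoms of `x`-extensions of GCCAT formulas over `xs`. -/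
noncomputable def extAtoms (𝒜 ℱ : Type) [Fintype 𝒜] [DecidableEq 𝒜] [Fintype ℱ] [DecidableEq ℱ]
    {V : Type} [Fintype V] [DecidableEq V] (xs : Finset V) (x : V) : List (Atom 𝒜 ℱ V) :=
  (Finset.univ : Finset (Atom 𝒜 ℱ V)).toList.filter (isExtAtom xs x)

/-- The `x`-extension formula determined by a sign assignment `τ`. -/
noncomputable def extFml (xs : Finset V) (x : V) (τ : Atom 𝒜 ℱ V → Bool) : Fml 𝒜 ℱ V :=
  signedConj (extAtoms 𝒜 ℱ xs x) τ

/-- `τ` is the sign assignment of an `x`-extension of a GCCAT formula over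
`xs`: `x = x` positive, `x = xᵢ` and `xᵢ = x` negative, and (canonically) `τ`
is `false` outside extension atoms. -/
noncomputable def extSignB (xs : Finset V) (x : V) (τ : Atom 𝒜 ℱ V → Bool) : Bool :=
  τ (.eq x x) &&
  (xs.toList.all fun v => !τ (.eq x v) && !τ (.eq v x)) &&
  ((Finset.univ : Finset (Atom 𝒜 ℱ V)).toList.all fun a => isExtAtom xs x a || !τ a)

/-- The list of all sign assignments of `x`-extensions over `xs`. -/
noncomputable def extSigns (𝒜 ℱ : Type) [Fintype 𝒜] [DecidableEq 𝒜] [Fintype ℱ] [DecidableEq ℱ]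
    {V : Type} [Fintype V] [DecidableEq V] (xs : Finset V) (x : V) :
    List (Atom 𝒜 ℱ V → Bool) :=
  (Finset.univ : Finset (Atom 𝒜 ℱ V → Bool)).toList.filter (extSignB xs x)

/-- Merge of two sign assignments: the union of their positive literals. -/
def mergeSign (τ₁ τ₂ : Atom 𝒜 ℱ V → Bool) : Atom 𝒜 ℱ V → Bool :=
  fun a => τ₁ a || τ₂ a

end AtomicTypes

/-- `T₁ ⊛ T₂` is defined iff the sets `S(T₁)`, `S(T₂)` of positive
non-equality literals are disjoint. -/
def MergeOK (τ₁ τ₂ : Atom 𝒜 ℱ V → Bool) : Prop :=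
  ∀ a : Atom 𝒜 ℱ V, a.isEq = false → ¬(τ₁ a = true ∧ τ₂ a = true)

/-! ## Counting star formulas over the language `L`

Variables are `Option (Fin n ⊕ Fin m)`: `some (inl i)` is the GCCAT variable
`xᵢ`, `some (inr j)` is the variable `yⱼ` of an equality conjunct, and `none`
is the bound variable `x` of the counting quantifiers. -/

/-- The variable type of counting star formulas. -/
abbrev VV (n m : ℕ) : Type := Option (Fin n ⊕ Fin m)

/-- The variable `xᵢ`. -/
def xvar {n m : ℕ} (i : Fin n) : VV n m := some (Sum.inl i)

/-- The variable `yⱼ`. -/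
def yvar {n m : ℕ} (j : Fin m) : VV n m := some (Sum.inr j)

/-- The set `{x₁,…,xₙ}` of GCCAT variables. -/
def XS (n m : ℕ) : Finset (VV n m) :=
  (Finset.univ : Finset (Fin n)).image (fun i => xvar i)

/-- Data of a counting star formula: the equality map `ι` (conjuncts
`yⱼ = x_{ι j}`), the GCCAT sign assignment `σ` over `{x₁,…,xₙ}`, and the
counting function `γ` on `x`-extensions. -/
structure CStar (𝒜 ℱ : Type) (n m : ℕ) where
  ι : Fin m → Fin n
  σ : Atom 𝒜 ℱ (VV n m) → Bool
  γ : (Atom 𝒜 ℱ (VV n m) → Bool) → CQ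

/-- Well-formedness: `σ` is a GCCAT sign assignment over `{x₁,…,xₙ}`. -/
def CStar.WF {𝒜 ℱ : Type} [Fintype 𝒜] [DecidableEq 𝒜] [Fintype ℱ] [DecidableEq ℱ]
    {n m : ℕ} (c : CStar 𝒜 ℱ n m) : Prop :=
  gccatSignB (XS n m) c.σ = true

/-- The counting star formula
`⋀_j yⱼ = x_{ι j} ∧ F_σ ∧ ⋀_{F′ ∈ ext(F_σ, x)} ∃^{γ(F′)} x. F′`. -/
noncomputable def csFml {𝒜 ℱ : Type}
    [Fintype 𝒜] [DecidableEq 𝒜] [Fintype ℱ] [DecidableEq ℱ] {n m : ℕ}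
    (c : CStar 𝒜 ℱ n m) : Fml 𝒜 ℱ (VV n m) :=
  (listConj ((List.finRange m).map fun j => Fml.eq (yvar j) (xvar (c.ι j)))).and <|
  (gccatFml (XS n m) c.σ).and <|
  listConj ((extSigns 𝒜 ℱ (XS n m) none).map fun τ =>
    Fml.cnt (c.γ τ) none (extFml (XS n m) none τ))

/-! ## The marked language `L′ = L ∪ {B₁, B₂}` and spatial building blocks

The unary symbols of `L′` are `𝒜 ⊕ Fin 2`; `Sum.inr 0` is the marker `B₁` and
`Sum.inr 1` is the marker `B₂`.  A marking `m ⊆ {1,2}` is a `Finset (Fin 2)`. -/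

/-- The marking `{1}`. -/
def mk1 : Finset (Fin 2) := {0}
/-- The marking `{2}`. -/
def mk2 : Finset (Fin 2) := {1}
/-- The marking `{1,2}`. -/
def mk12 : Finset (Fin 2) := {0, 1}

/-- The `L′`-environment `e^m` obtained from an `L`-environment `e`:
the marker `B_q` holds of `d` iff `q ∈ m` and `d ∉ {e(x₁),…,e(xₙ)}`. -/
def markEnv {𝒜 ℱ D : Type} {n m : ℕ} (e : Env 𝒜 ℱ (VV n m) D)
    (mk : Finset (Fin 2)) : Env (𝒜 ⊕ Fin 2) ℱ (VV n m) D where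
  un := Sum.elim e.un (fun q d => q ∈ mk ∧ ∀ i : Fin n, d ≠ e.var (xvar i))
  bin := e.bin
  var := e.var

/-- The restriction `e|L` of an `L′`-environment to the language `L`. -/
def unmarkEnv {𝒜 ℱ D : Type} {n m : ℕ} (e : Env (𝒜 ⊕ Fin 2) ℱ (VV n m) D) :
    Env 𝒜 ℱ (VV n m) D where
  un := fun A => e.un (Sum.inl A)
  bin := e.bin
  var := e.var

/-- The spatial building blocks of the translations `str_m` of counting stars:
`kstr(F_σ)`, `empe`, `oneNum_m(T)` and `anyNum_m(T)`. -/
inductive Blk (𝒜 ℱ : Type) (n m : ℕ) : Type where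
  | kstr (σ : Atom 𝒜 ℱ (VV n m) → Bool) : Blk 𝒜 ℱ n m
  | empe : Blk 𝒜 ℱ n m
  | oneNum (mk : Finset (Fin 2)) (τ : Atom 𝒜 ℱ (VV n m) → Bool) : Blk 𝒜 ℱ n m
  | anyNum (mk : Finset (Fin 2)) (τ : Atom 𝒜 ℱ (VV n m) → Bool) : Blk 𝒜 ℱ n m

section BlkSem

variable {𝒜 ℱ D : Type} [Fintype 𝒜] [DecidableEq 𝒜] [Fintype ℱ] [DecidableEq ℱ]
  {n m : ℕ}

/-- `d` is outside `{e(x₁),…,e(xₙ)}` (the guard `⋀ᵢ x ≠ xᵢ`). -/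
def guardAt (e : Env (𝒜 ⊕ Fin 2) ℱ (VV n m) D) (d : D) : Prop :=
  ∀ i : Fin n, d ≠ e.var (xvar i)

/-- Truth of an `L`-atom in an `L′`-environment under a valuation `ρ`. -/
def Atom.holdsAt (e : Env (𝒜 ⊕ Fin 2) ℱ (VV n m) D) (ρ : VV n m → D) :
    Atom 𝒜 ℱ (VV n m) → Prop
  | .un A v => e.un (Sum.inl A) (ρ v)
  | .bin f v w => e.bin f (ρ v) (ρ w)
  | .eq v w => ρ v = ρ w

/-- The GCCAT formula of `σ` over `{x₁,…,xₙ}` holds in `e`. -/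
def gccatTruth (e : Env (𝒜 ⊕ Fin 2) ℱ (VV n m) D)
    (σ : Atom 𝒜 ℱ (VV n m) → Bool) : Prop :=
  ∀ a : Atom 𝒜 ℱ (VV n m), a.varset ⊆ XS n m →
    (a.holdsAt e e.var ↔ σ a = true)

/-- The `x`-extension of `σ` with sign `τ` holds in `e` with `x ↦ d`. -/
def extTruth (e : Env (𝒜 ⊕ Fin 2) ℱ (VV n m) D) (d : D)
    (τ : Atom 𝒜 ℱ (VV n m) → Bool) : Prop :=
  ∀ a : Atom 𝒜 ℱ (VV n m), isExtAtom (XS n m) none a = true →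
    (a.holdsAt e (Function.update e.var none d) ↔ τ a = true)

/-- `Mark_mk(x)` holds of `d` in `e`: `B_q(d)` iff `q ∈ mk`. -/
def markTruth (e : Env (𝒜 ⊕ Fin 2) ℱ (VV n m) D) (d : D)
    (mk : Finset (Fin 2)) : Prop :=
  ∀ q : Fin 2, e.un (Sum.inr q) d ↔ q ∈ mk

/-- The sign assignment of the empty extension: only `x = x` is positive. -/
def emptyExtSign : Atom 𝒜 ℱ (VV n m) → Bool :=
  fun a => decide (a = Atom.eq none none)

/-- The sign assignment of the empty GCCAT formula: only the trivial
equalities `xᵢ = xᵢ` are positive. -/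
def emptyGSign : Atom 𝒜 ℱ (VV n m) → Bool :=
  fun a => match a with
    | .eq v w => decide (v = w)
    | _ => false

/-- `allEmptyExt(x)` holds of `d` in `e`: the empty extension together with
`Mark_∅(x)`. -/
def allEmptyAt (e : Env (𝒜 ⊕ Fin 2) ℱ (VV n m) D) (d : D) : Prop :=
  extTruth e d emptyExtSign ∧ markTruth e d ∅

/-- Semantics of the building blocks as predicates on `L′`-environments. -/
def Blk.sem : Blk 𝒜 ℱ n m → Env (𝒜 ⊕ Fin 2) ℱ (VV n m) D → Prop
  | .kstr σ => fun e => gccatTruth e σ ∧ ∀ d, guardAt e d → allEmptyAt e d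
  | .empe => fun e => gccatTruth e emptyGSign ∧ ∀ d, guardAt e d → allEmptyAt e d
  | .anyNum mk τ => fun e => gccatTruth e emptyGSign ∧
      ∀ d, guardAt e d → ((extTruth e d τ ∧ markTruth e d mk) ∨ allEmptyAt e d)
  | .oneNum mk τ => fun e =>
      (gccatTruth e emptyGSign ∧
        ∀ d, guardAt e d → ((extTruth e d τ ∧ markTruth e d mk) ∨ allEmptyAt e d)) ∧
      {d : D | guardAt e d ∧ extTruth e d τ ∧ markTruth e d mk}.ncard = 1

/-- `emp`: all predicates are interpreted by empty relations. -/
def emp' {𝒜' ℱ' V' D' : Type} : Env 𝒜' ℱ' V' D' → Prop := fun e =>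
  (∀ A d, ¬ e.un A d) ∧ (∀ f d₁ d₂, ¬ e.bin f d₁ d₂)

/-- Semantics of a finite spatial conjunction of building blocks (an empty
conjunction is `emp`). -/
noncomputable def semM (s : Multiset (Blk 𝒜 ℱ n m))
    (e : Env (𝒜 ⊕ Fin 2) ℱ (VV n m) D) : Prop :=
  (s.toList.foldr (fun b P => spand (Blk.sem b) P) emp') e

end BlkSem

section Rules

variable {𝒜 ℱ : Type} [Fintype 𝒜] [DecidableEq 𝒜] [Fintype ℱ] [DecidableEq ℱ]
  {n m : ℕ}

/-- The transformation rules (1)–(4) for combining spatial conjuncts,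
applicable only when `T₁ ⊛ T₂` is defined. -/
inductive Rule14 : Multiset (Blk 𝒜 ℱ n m) → Multiset (Blk 𝒜 ℱ n m) → Prop where
  | r1 (τ₁ τ₂ : Atom 𝒜 ℱ (VV n m) → Bool) :
      extSignB (XS n m) none τ₁ = true → extSignB (XS n m) none τ₂ = true →
      MergeOK τ₁ τ₂ →
      Rule14 {Blk.oneNum mk1 τ₁, Blk.oneNum mk2 τ₂}
             {Blk.oneNum mk12 (mergeSign τ₁ τ₂)}
  | r2 (τ₁ τ₂ : Atom 𝒜 ℱ (VV n m) → Bool) :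
      extSignB (XS n m) none τ₁ = true → extSignB (XS n m) none τ₂ = true →
      MergeOK τ₁ τ₂ →
      Rule14 {Blk.oneNum mk1 τ₁, Blk.anyNum mk2 τ₂}
             {Blk.oneNum mk12 (mergeSign τ₁ τ₂), Blk.anyNum mk2 τ₂}
  | r3 (τ₁ τ₂ : Atom 𝒜 ℱ (VV n m) → Bool) :
      extSignB (XS n m) none τ₁ = true → extSignB (XS n m) none τ₂ = true →
      MergeOK τ₁ τ₂ →
      Rule14 {Blk.anyNum mk1 τ₁, Blk.oneNum mk2 τ₂}
             {Blk.anyNum mk1 τ₁, Blk.oneNum mk12 (mergeSign τ₁ τ₂)}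
  | r4 (τ₁ τ₂ : Atom 𝒜 ℱ (VV n m) → Bool) :
      extSignB (XS n m) none τ₁ = true → extSignB (XS n m) none τ₂ = true →
      MergeOK τ₁ τ₂ →
      Rule14 {Blk.anyNum mk1 τ₁, Blk.anyNum mk2 τ₂}
             {Blk.anyNum mk1 τ₁, Blk.anyNum mk2 τ₂,
              Blk.anyNum mk12 (mergeSign τ₁ τ₂)}

/-- The transformation rules (5) and (6). -/
inductive Rule56 : Multiset (Blk 𝒜 ℱ n m) → Multiset (Blk 𝒜 ℱ n m) → Prop where
  | r5 (τ : Atom 𝒜 ℱ (VV n m) → Bool) :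
      extSignB (XS n m) none τ = true →
      Rule56 {Blk.anyNum mk1 τ} {Blk.empe}
  | r6 (τ : Atom 𝒜 ℱ (VV n m) → Bool) :
      extSignB (XS n m) none τ = true →
      Rule56 {Blk.anyNum mk2 τ} {Blk.empe}

/-- One of the six transformation rules. -/
def Rule (G₁ G₂ : Multiset (Blk 𝒜 ℱ n m)) : Prop :=
  Rule14 G₁ G₂ ∨ Rule56 G₁ G₂

/-- Structural equivalence steps: `⋆` is applied modulo the unit law for the
(empty-heap) conjunct `empe` and the idempotence of `anyNum`. -/
inductive SEq : Multiset (Blk 𝒜 ℱ n m) → Multiset (Blk 𝒜 ℱ n m) → Prop where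
  | empeIntro (s : Multiset (Blk 𝒜 ℱ n m)) : SEq s (Blk.empe ::ₘ s)
  | empeElim (s : Multiset (Blk 𝒜 ℱ n m)) : SEq (Blk.empe ::ₘ s) s
  | anyDup (mk : Finset (Fin 2)) (τ : Atom 𝒜 ℱ (VV n m) → Bool)
      (s : Multiset (Blk 𝒜 ℱ n m)) :
      SEq (Blk.anyNum mk τ ::ₘ s) (Blk.anyNum mk τ ::ₘ Blk.anyNum mk τ ::ₘ s)
  | anyContract (mk : Finset (Fin 2)) (τ : Atom 𝒜 ℱ (VV n m) → Bool)
      (s : Multiset (Blk 𝒜 ℱ n m)) :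
      SEq (Blk.anyNum mk τ ::ₘ Blk.anyNum mk τ ::ₘ s) (Blk.anyNum mk τ ::ₘ s)

/-- A single step of the rewriting used in the `⊳` (yields) relation: a rule
applied inside a spatial context (modulo associativity and commutativity,
which the multiset representation provides), where rules (5), (6) may be
applied only when rules (1)–(4) are not applicable; or a structural step. -/
inductive YStep : Multiset (Blk 𝒜 ℱ n m) → Multiset (Blk 𝒜 ℱ n m) → Prop where
  | ofR14 (G₁ G₂ s : Multiset (Blk 𝒜 ℱ n m)) :
      Rule14 G₁ G₂ → YStep (G₁ + s) (G₂ + s)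
  | ofR56 (G₁ G₂ s : Multiset (Blk 𝒜 ℱ n m)) :
      Rule56 G₁ G₂ →
      (¬ ∃ H₁ H₂ : Multiset (Blk 𝒜 ℱ n m), Rule14 H₁ H₂ ∧ H₁ ≤ G₁ + s) →
      YStep (G₁ + s) (G₂ + s)
  | struct (s₁ s₂ : Multiset (Blk 𝒜 ℱ n m)) : SEq s₁ s₂ → YStep s₁ s₂

/-- All `oneNum`/`anyNum` conjuncts carry the marking `{1,2}`. -/
def OnlyFinal (s : Multiset (Blk 𝒜 ℱ n m)) : Prop :=
  ∀ b ∈ s, ∀ (mk : Finset (Fin 2)) (τ : Atom 𝒜 ℱ (VV n m) → Bool),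
    (b = Blk.oneNum mk τ ∨ b = Blk.anyNum mk τ) → mk = mk12

/-- The yields relation `G₁ ⊳ G₂`, where `G₂ : Option _` with `none`
representing `⊥`: first the conjunction `kstr(F₁) ⋆ kstr(F₂)` is replaced by
`kstr(F₁ ⊛ F₂)`, or by `⊥` if `F₁ ⊛ F₂` is undefined; then a sequence of the
transformation rules is applied (with rules (5), (6) applied only when rules
(1)–(4) are inapplicable), such that the result contains only spatial
`oneNum`/`anyNum` conjuncts of the forms `oneNum_{1,2}` and `anyNum_{1,2}`. -/
def Yields (s₁ : Multiset (Blk 𝒜 ℱ n m)) : Option (Multiset (Blk 𝒜 ℱ n m)) → Prop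
  | none => ∃ (σ₁ σ₂ : Atom 𝒜 ℱ (VV n m) → Bool) (rest : Multiset (Blk 𝒜 ℱ n m)),
      s₁ = Blk.kstr σ₁ ::ₘ Blk.kstr σ₂ ::ₘ rest ∧ ¬ MergeOK σ₁ σ₂
  | some s₂ => ∃ (σ₁ σ₂ : Atom 𝒜 ℱ (VV n m) → Bool) (rest : Multiset (Blk 𝒜 ℱ n m)),
      s₁ = Blk.kstr σ₁ ::ₘ Blk.kstr σ₂ ::ₘ rest ∧ MergeOK σ₁ σ₂ ∧
      Relation.ReflTransGen YStep (Blk.kstr (mergeSign σ₁ σ₂) ::ₘ rest) s₂ ∧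
      OnlyFinal s₂

/-- The spatial translation `xstr_mk(∃^{s} x. F′_τ)` as a multiset of spatial
conjuncts: `∃^{=k}` becomes `k` copies of `oneNum` (and `empe`), and `∃^{≥k}`
additionally has an `anyNum` conjunct. -/
def xstrBlocks (mk : Finset (Fin 2)) (τ : Atom 𝒜 ℱ (VV n m) → Bool) :
    CQ → Multiset (Blk 𝒜 ℱ n m)
  | .exact k => Multiset.replicate k (Blk.oneNum mk τ) + {Blk.empe}
  | .atLeast k => Multiset.replicate k (Blk.oneNum mk τ) + {Blk.empe, Blk.anyNum mk τ}

/-- The spatial conjuncts of the translation `str_mk(C)` of a counting star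
formula `C`: `kstr(F_σ) ⋆ ⋆_{τ} xstr_mk(∃^{γ τ} x. F′_τ)`. -/
noncomputable def strBlocks (mk : Finset (Fin 2)) (c : CStar 𝒜 ℱ n m) :
    Multiset (Blk 𝒜 ℱ n m) :=
  Blk.kstr c.σ ::ₘ
    ((extSigns 𝒜 ℱ (XS n m) none).map fun τ => xstrBlocks mk τ (c.γ τ)).sum

/-- Satisfaction of the equality part `E ≡ ⋀_j yⱼ = x_{ι j}`. -/
def eqSat {𝒜' D : Type} (c : CStar 𝒜 ℱ n m) (e : Env 𝒜' ℱ (VV n m) D) : Prop :=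
  ∀ j : Fin m, e.var (yvar j) = e.var (xvar (c.ι j))

/-- Truth of the translation `str_mk(C) = E ∧ (spatial conjunction of blocks)`
in an `L′`-environment. -/
noncomputable def strSat {D : Type} (mk : Finset (Fin 2)) (c : CStar 𝒜 ℱ n m)
    (e : Env (𝒜 ⊕ Fin 2) ℱ (VV n m) D) : Prop :=
  eqSat c e ∧ semM (strBlocks mk c) e

/-- `ERes C₁ C₂ C₃`: the counting stars have the same equality part and
`str₁(C₁) ⋆ str₂(C₂) ⊳ str₁,₂(C₃)`. -/
noncomputable def ERes (c₁ c₂ c₃ : CStar 𝒜 ℱ n m) : Prop :=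
  c₁.ι = c₂.ι ∧ c₂.ι = c₃.ι ∧
  Yields (strBlocks mk1 c₁ + strBlocks mk2 c₂) (some (strBlocks mk12 c₃))

end Rules


/-! ## Auxiliary machinery for the soundness proof -/

section SoundnessAux
set_option linter.unusedSectionVars false

/-- Union of two environments (variable assignment taken from the first). -/
def unite {𝒜' ℱ' V' D' : Type} (e₁ e₂ : Env 𝒜' ℱ' V' D') : Env 𝒜' ℱ' V' D' where
  un A d := e₁.un A d ∨ e₂.un A d
  bin f a b := e₁.bin f a b ∨ e₂.bin f a b
  var := e₁.var

variable {𝒜' ℱ' V' D' : Type}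

lemma split_comm {e a b : Env 𝒜' ℱ' V' D'} (h : e.Split a b) : e.Split b a := by
  obtain ⟨h1, h2, h3, h4⟩ := h
  exact ⟨h2, h1, fun A d => by have := h3 A d; tauto,
    fun f d₁ d₂ => by have := h4 f d₁ d₂; tauto⟩

lemma split_rot {e a x f g : Env 𝒜' ℱ' V' D'} (h1 : e.Split a x) (h2 : a.Split f g) :
    e.Split f (unite g x) ∧ (unite g x).Split g x := by
  obtain ⟨av, xv, au, ab⟩ := h1
  obtain ⟨fv, gv, fu, fb⟩ := h2
  refine ⟨⟨by rw [fv, av], ?_, fun A d => ?_, fun f' d₁ d₂ => ?_⟩,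
    ⟨rfl, ?_, fun A d => ?_, fun f' d₁ d₂ => ?_⟩⟩
  · show g.var = e.var; rw [gv, av]
  · have := au A d; have := fu A d; simp only [unite]; tauto
  · have := ab f' d₁ d₂; have := fb f' d₁ d₂; simp only [unite]; tauto
  · show x.var = g.var; rw [xv, gv, av]
  · have := au A d; have := fu A d; simp only [unite]; tauto
  · have := ab f' d₁ d₂; have := fb f' d₁ d₂; simp only [unite]; tauto

lemma split_pull {e a x f w : Env 𝒜' ℱ' V' D'} (h1 : e.Split a x) (h2 : x.Split f w) :
    e.Split f (unite a w) ∧ (unite a w).Split a w := by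
  obtain ⟨av, xv, au, ab⟩ := h1
  obtain ⟨fv, wv, fu, fb⟩ := h2
  refine ⟨⟨by rw [fv, xv], ?_, fun A d => ?_, fun f' d₁ d₂ => ?_⟩,
    ⟨rfl, ?_, fun A d => ?_, fun f' d₁ d₂ => ?_⟩⟩
  · show a.var = e.var; exact av
  · have := au A d; have := fu A d; simp only [unite]; tauto
  · have := ab f' d₁ d₂; have := fb f' d₁ d₂; simp only [unite]; tauto
  · show w.var = a.var; rw [wv, xv, av]
  · have := au A d; have := fu A d; simp only [unite]; tauto
  · have := ab f' d₁ d₂; have := fb f' d₁ d₂; simp only [unite]; tauto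

lemma split_assoc {e a x b c : Env 𝒜' ℱ' V' D'} (h1 : e.Split a x) (h2 : x.Split b c) :
    e.Split (unite a b) c ∧ (unite a b).Split a b := by
  obtain ⟨av, xv, au, ab⟩ := h1
  obtain ⟨bv, cv, bu, bb⟩ := h2
  refine ⟨⟨?_, by rw [cv, xv], fun A d => ?_, fun f' d₁ d₂ => ?_⟩,
    ⟨rfl, ?_, fun A d => ?_, fun f' d₁ d₂ => ?_⟩⟩
  · show a.var = e.var; exact av
  · have := au A d; have := bu A d; simp only [unite]; tauto
  · have := ab f' d₁ d₂; have := bb f' d₁ d₂; simp only [unite]; tauto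
  · show b.var = a.var; rw [bv, xv, av]
  · have := au A d; have := bu A d; simp only [unite]; tauto
  · have := ab f' d₁ d₂; have := bb f' d₁ d₂; simp only [unite]; tauto

/-! ### `semM` interface -/

variable {𝒜 ℱ : Type} [Fintype 𝒜] [DecidableEq 𝒜] [Fintype ℱ] [DecidableEq ℱ]
  {n m : ℕ} {D : Type}

/-- Semantics of a list of blocks. -/
def semL (l : List (Blk 𝒜 ℱ n m)) : Env (𝒜 ⊕ Fin 2) ℱ (VV n m) D → Prop :=
  l.foldr (fun b P => spand (Blk.sem b) P) emp'

lemma spand_congr {P Q P' Q' : Env (𝒜 ⊕ Fin 2) ℱ (VV n m) D → Prop}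
    (hP : ∀ e, P e ↔ P' e) (hQ : ∀ e, Q e ↔ Q' e) (e : Env (𝒜 ⊕ Fin 2) ℱ (VV n m) D) :
    spand P Q e ↔ spand P' Q' e := by
  simp only [spand, hP, hQ]

lemma spand_swap_imp (P Q R : Env (𝒜 ⊕ Fin 2) ℱ (VV n m) D → Prop)
    (e : Env (𝒜 ⊕ Fin 2) ℱ (VV n m) D) :
    spand P (spand Q R) e → spand Q (spand P R) e := by
  rintro ⟨a, x, h1, hP, b, c, h2, hQ, hR⟩
  obtain ⟨hs1, hs2⟩ := split_pull h1 h2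
  exact ⟨b, unite a c, hs1, hQ, a, c, hs2, hP, hR⟩

lemma semL_perm {l₁ l₂ : List (Blk 𝒜 ℱ n m)} (h : l₁.Perm l₂)
    (e : Env (𝒜 ⊕ Fin 2) ℱ (VV n m) D) : semL l₁ e ↔ semL l₂ e := by
  induction h generalizing e with
  | nil => exact Iff.rfl
  | cons b h ih =>
      exact spand_congr (fun _ => Iff.rfl) (fun e' => ih e') e
  | swap a b l =>
      exact ⟨spand_swap_imp _ _ _ e, spand_swap_imp _ _ _ e⟩
  | trans h1 h2 ih1 ih2 => exact (ih1 e).trans (ih2 e)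

lemma semM_cons {b : Blk 𝒜 ℱ n m} {s : Multiset (Blk 𝒜 ℱ n m)}
    {e : Env (𝒜 ⊕ Fin 2) ℱ (VV n m) D} :
    semM (b ::ₘ s) e ↔ ∃ e₁ e₂, e.Split e₁ e₂ ∧ Blk.sem b e₁ ∧ semM s e₂ := by
  have hp : (b ::ₘ s).toList.Perm (b :: s.toList) := by
    apply Multiset.coe_eq_coe.mp
    rw [← Multiset.cons_coe, Multiset.coe_toList, Multiset.coe_toList]
  exact (semL_perm hp e)

lemma semM_zero {e : Env (𝒜 ⊕ Fin 2) ℱ (VV n m) D} : semM (0 : Multiset (Blk 𝒜 ℱ n m)) e ↔ emp' e := by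
  show semL ((0 : Multiset (Blk 𝒜 ℱ n m)).toList) e ↔ _
  rw [Multiset.toList_zero]
  exact Iff.rfl

end SoundnessAux


section SoundnessSem
set_option linter.unusedSectionVars false

variable {𝒜 ℱ : Type} [Fintype 𝒜] [DecidableEq 𝒜] [Fintype ℱ] [DecidableEq ℱ]
  {n m : ℕ} {D : Type}

/-- The body of the `anyNum` semantics. -/
def AnyBody (mk : Finset (Fin 2)) (τ : Atom 𝒜 ℱ (VV n m) → Bool)
    (e : Env (𝒜 ⊕ Fin 2) ℱ (VV n m) D) : Prop :=
  gccatTruth e emptyGSign ∧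
    ∀ d, guardAt e d → ((extTruth e d τ ∧ markTruth e d mk) ∨ allEmptyAt e d)

lemma sem_anyNum_iff {mk τ} {e : Env (𝒜 ⊕ Fin 2) ℱ (VV n m) D} :
    Blk.sem (.anyNum mk τ) e ↔ AnyBody mk τ e := Iff.rfl

lemma sem_oneNum_iff {mk τ} {e : Env (𝒜 ⊕ Fin 2) ℱ (VV n m) D} :
    Blk.sem (.oneNum mk τ) e ↔ AnyBody mk τ e ∧
      {d : D | guardAt e d ∧ extTruth e d τ ∧ markTruth e d mk}.ncard = 1 := Iff.rfl

lemma mem_XS_iff {v : VV n m} : v ∈ XS n m ↔ ∃ i, v = xvar i := by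
  simp [XS, eq_comm]

lemma xvar_injective {i j : Fin n} (h : (xvar i : VV n m) = xvar j) : i = j := by
  simpa [xvar] using h

lemma mem_insert_none {v : VV n m} (h : v ∈ insert none (XS n m)) :
    v = none ∨ ∃ i, v = xvar i := by
  rcases Finset.mem_insert.mp h with h | h
  · exact Or.inl h
  · exact Or.inr (mem_XS_iff.mp h)

lemma extAtom_cases {a : Atom 𝒜 ℱ (VV n m)} (h : isExtAtom (XS n m) none a = true) :
    (∃ A, a = .un A none) ∨
    (∃ f', a = .bin f' none none) ∨ (∃ f' i, a = .bin f' none (xvar i)) ∨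
    (∃ f' i, a = .bin f' (xvar i) none) ∨
    a = .eq none none ∨ (∃ i, a = .eq none (xvar i)) ∨ (∃ i, a = .eq (xvar i) none) := by
  simp only [isExtAtom, Bool.and_eq_true, decide_eq_true_eq] at h
  obtain ⟨hsub, hmem⟩ := h
  cases a with
  | un A v =>
      simp only [Atom.varset, Finset.mem_singleton] at hmem
      exact Or.inl ⟨A, by rw [hmem]⟩
  | bin f' v w =>
      have hv := mem_insert_none (hsub (show v ∈ (Atom.bin f' v w).varset by
        simp [Atom.varset]))
      have hw := mem_insert_none (hsub (show w ∈ (Atom.bin f' v w).varset by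
        simp [Atom.varset]))
      simp only [Atom.varset, Finset.mem_insert, Finset.mem_singleton] at hmem
      rcases hv with rfl | ⟨i, rfl⟩
      · rcases hw with rfl | ⟨j, rfl⟩
        · exact Or.inr (Or.inl ⟨f', rfl⟩)
        · exact Or.inr (Or.inr (Or.inl ⟨f', j, rfl⟩))
      · rcases hw with rfl | ⟨j, rfl⟩
        · exact Or.inr (Or.inr (Or.inr (Or.inl ⟨f', i, rfl⟩)))
        · exfalso; rcases hmem with h | h <;> simp [xvar] at h
  | eq v w =>
      have hv := mem_insert_none (hsub (show v ∈ (Atom.eq v w : Atom 𝒜 ℱ (VV n m)).varset by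
        simp [Atom.varset]))
      have hw := mem_insert_none (hsub (show w ∈ (Atom.eq v w : Atom 𝒜 ℱ (VV n m)).varset by
        simp [Atom.varset]))
      simp only [Atom.varset, Finset.mem_insert, Finset.mem_singleton] at hmem
      rcases hv with rfl | ⟨i, rfl⟩
      · rcases hw with rfl | ⟨j, rfl⟩
        · exact Or.inr (Or.inr (Or.inr (Or.inr (Or.inl rfl))))
        · exact Or.inr (Or.inr (Or.inr (Or.inr (Or.inr (Or.inl ⟨j, rfl⟩)))))
      · rcases hw with rfl | ⟨j, rfl⟩
        · exact Or.inr (Or.inr (Or.inr (Or.inr (Or.inr (Or.inr ⟨i, rfl⟩)))))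
        · exfalso; rcases hmem with h | h <;> simp [xvar] at h

lemma extSign_facts {τ : Atom 𝒜 ℱ (VV n m) → Bool} (h : extSignB (XS n m) none τ = true) :
    τ (.eq none none) = true ∧
      ∀ i : Fin n, τ (.eq none (xvar i)) = false ∧ τ (.eq (xvar i) none) = false := by
  simp only [extSignB, Bool.and_eq_true, List.all_eq_true, Bool.not_eq_true'] at h
  refine ⟨h.1.1, fun i => ?_⟩
  have hm : (xvar i : VV n m) ∈ (XS n m).toList := by
    rw [Finset.mem_toList]; exact mem_XS_iff.mpr ⟨i, rfl⟩
  exact h.1.2 _ hm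

lemma gccat_inj {e : Env (𝒜 ⊕ Fin 2) ℱ (VV n m) D} (he : gccatTruth e emptyGSign)
    {i j : Fin n} (h : e.var (xvar i) = e.var (xvar j)) : i = j := by
  have hs : (Atom.eq (xvar i) (xvar j) : Atom 𝒜 ℱ (VV n m)).varset ⊆ XS n m := by
    intro v hv
    simp only [Atom.varset, Finset.mem_insert, Finset.mem_singleton] at hv
    rcases hv with rfl | rfl <;> exact mem_XS_iff.mpr ⟨_, rfl⟩
  have h2 := (he _ hs).mp h
  simp only [emptyGSign, decide_eq_true_eq] at h2
  exact xvar_injective h2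

lemma emptyGSign_ne {a : Atom 𝒜 ℱ (VV n m)} (hne : a.isEq = false) :
    emptyGSign a = false := by
  cases a with
  | un A v => rfl
  | bin f v w => rfl
  | eq v w => exact absurd hne (by simp [Atom.isEq])

lemma emptyExtSign_ne {a : Atom 𝒜 ℱ (VV n m)} (hne : a.isEq = false) :
    emptyExtSign a = false := by
  cases a with
  | un A v => simp [emptyExtSign]
  | bin f v w => simp [emptyExtSign]
  | eq v w => exact absurd hne (by simp [Atom.isEq])

lemma holds_split {e f g : Env (𝒜 ⊕ Fin 2) ℱ (VV n m) D} (hs : e.Split f g)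
    {a : Atom 𝒜 ℱ (VV n m)} (hne : a.isEq = false) (ρ : VV n m → D) :
    a.holdsAt e ρ ↔ (a.holdsAt f ρ ∨ a.holdsAt g ρ) := by
  obtain ⟨-, -, hu, hb⟩ := hs
  cases a with
  | un A v => exact (hu _ _).1
  | bin f' v w => exact (hb _ _ _).1
  | eq v w => exact absurd hne (by simp [Atom.isEq])

lemma isEq_cases (a : Atom 𝒜 ℱ (VV n m)) :
    a.isEq = false ∨ ∃ v w, a = .eq v w := by
  cases a with
  | un A v => exact Or.inl rfl
  | bin f v w => exact Or.inl rfl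
  | eq v w => exact Or.inr ⟨v, w, rfl⟩

lemma gccat_union {e f g : Env (𝒜 ⊕ Fin 2) ℱ (VV n m) D} (hs : e.Split f g)
    (hf : gccatTruth f emptyGSign) (hg : gccatTruth g emptyGSign) :
    gccatTruth e emptyGSign := by
  intro a ha
  have hfa := hf a ha; rw [hs.1] at hfa
  have hga := hg a ha; rw [hs.2.1] at hga
  rcases isEq_cases a with hne' | ⟨v, w, rfl⟩
  · rw [holds_split hs hne', hfa, hga, emptyGSign_ne hne']; simp
  · exact hfa

lemma extTruth_union {e f g : Env (𝒜 ⊕ Fin 2) ℱ (VV n m) D} (hs : e.Split f g)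
    {d : D} {τf : Atom 𝒜 ℱ (VV n m) → Bool}
    (hxf : extTruth f d τf) (hxg : extTruth g d emptyExtSign) :
    extTruth e d τf := by
  intro a ha
  have hxa := hxf a ha; rw [hs.1] at hxa
  have hxb := hxg a ha; rw [hs.2.1] at hxb
  rcases isEq_cases a with hne' | ⟨v, w, rfl⟩
  · rw [holds_split hs hne', hxa, hxb, emptyExtSign_ne hne']; simp
  · exact hxa

lemma markTruth_union {e f g : Env (𝒜 ⊕ Fin 2) ℱ (VV n m) D} (hs : e.Split f g)
    {d : D} {mf mg : Finset (Fin 2)}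
    (hmf : markTruth f d mf) (hmg : markTruth g d mg) :
    markTruth e d (mf ∪ mg) := by
  intro q
  rw [(hs.2.2.1 (Sum.inr q) d).1, hmf q, hmg q, Finset.mem_union]

/-- If `e` splits into two environments both satisfying the `anyNum` body for
the same marking and extension, then so does `e`. -/
lemma anyBody_union {mk : Finset (Fin 2)} {τ : Atom 𝒜 ℱ (VV n m) → Bool}
    {e f g : Env (𝒜 ⊕ Fin 2) ℱ (VV n m) D}
    (hs : e.Split f g) (hf : AnyBody mk τ f) (hg : AnyBody mk τ g)
    (hne : mk.Nonempty) : AnyBody mk τ e := by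
  obtain ⟨q0, hq0⟩ := hne
  refine ⟨gccat_union hs hf.1 hg.1, ?_⟩
  intro d hd
  have hdf : guardAt f d := by intro i; rw [hs.1]; exact hd i
  have hdg : guardAt g d := by intro i; rw [hs.2.1]; exact hd i
  rcases hf.2 d hdf with ⟨hxf, hmf⟩ | ⟨hxf, hmf⟩ <;>
    rcases hg.2 d hdg with ⟨hxg, hmg⟩ | ⟨hxg, hmg⟩
  · exact absurd ⟨(hmf q0).mpr hq0, (hmg q0).mpr hq0⟩ ((hs.2.2.1 (Sum.inr q0) d).2)
  · refine Or.inl ⟨extTruth_union hs hxf hxg, ?_⟩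
    have h := markTruth_union hs hmf hmg
    rwa [Finset.union_empty] at h
  · refine Or.inl ⟨extTruth_union (split_comm hs) hxg hxf, ?_⟩
    have h := markTruth_union hs hmf hmg
    rwa [Finset.empty_union] at h
  · refine Or.inr ⟨extTruth_union hs hxf hxg, ?_⟩
    have h := markTruth_union hs hmf hmg
    rwa [Finset.union_empty] at h

end SoundnessSem



section SoundnessSplit
set_option linter.unusedSectionVars false

variable {𝒜 ℱ : Type} [Fintype 𝒜] [DecidableEq 𝒜] [Fintype ℱ] [DecidableEq ℱ]
  {n m : ℕ} {D : Type}

/-- Attribution of unary relation instances to the left part of the split. -/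
def leftUn (τ₁ : Atom 𝒜 ℱ (VV n m) → Bool) : 𝒜 ⊕ Fin 2 → Prop
  | Sum.inl A => τ₁ (.un A none) = true
  | Sum.inr q => q = 0

open Classical in
/-- Attribution of binary relation instances to the left part of the split. -/
noncomputable def leftBin (e : Env (𝒜 ⊕ Fin 2) ℱ (VV n m) D)
    (τ₁ : Atom 𝒜 ℱ (VV n m) → Bool) (f' : ℱ) (d₁ d₂ : D) : Prop :=
  if h₁ : ∃ i : Fin n, d₁ = e.var (xvar i) then
    if _h₂ : ∃ i : Fin n, d₂ = e.var (xvar i) then True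
    else τ₁ (Atom.bin f' (xvar h₁.choose) none) = true
  else
    if h₂ : ∃ i : Fin n, d₂ = e.var (xvar i) then
      τ₁ (Atom.bin f' none (xvar h₂.choose)) = true
    else if d₁ = d₂ then τ₁ (Atom.bin f' none none) = true else True

/-- The left part of the split of `e` according to `τ₁`. -/
noncomputable def splitL (e : Env (𝒜 ⊕ Fin 2) ℱ (VV n m) D)
    (τ₁ : Atom 𝒜 ℱ (VV n m) → Bool) : Env (𝒜 ⊕ Fin 2) ℱ (VV n m) D where
  un A d := e.un A d ∧ leftUn τ₁ A
  bin f' a b := e.bin f' a b ∧ leftBin e τ₁ f' a b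
  var := e.var

/-- The right part of the split of `e` according to `τ₁`. -/
noncomputable def splitR (e : Env (𝒜 ⊕ Fin 2) ℱ (VV n m) D)
    (τ₁ : Atom 𝒜 ℱ (VV n m) → Bool) : Env (𝒜 ⊕ Fin 2) ℱ (VV n m) D where
  un A d := e.un A d ∧ ¬ leftUn τ₁ A
  bin f' a b := e.bin f' a b ∧ ¬ leftBin e τ₁ f' a b
  var := e.var

variable {e : Env (𝒜 ⊕ Fin 2) ℱ (VV n m) D} {τ₁ τ₂ : Atom 𝒜 ℱ (VV n m) → Bool}

lemma splitL_var : (splitL e τ₁).var = e.var := rfl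
lemma splitR_var : (splitR e τ₁).var = e.var := rfl

lemma split_splitLR : e.Split (splitL e τ₁) (splitR e τ₁) := by
  refine ⟨rfl, rfl, fun A d => ⟨?_, ?_⟩, fun f' a b => ⟨?_, ?_⟩⟩
  · show e.un A d ↔ (e.un A d ∧ leftUn τ₁ A) ∨ (e.un A d ∧ ¬ leftUn τ₁ A); tauto
  · rintro ⟨⟨-, h1⟩, ⟨-, h2⟩⟩; exact h2 h1
  · show e.bin f' a b ↔ (e.bin f' a b ∧ leftBin e τ₁ f' a b) ∨
      (e.bin f' a b ∧ ¬ leftBin e τ₁ f' a b); tauto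
  · rintro ⟨⟨-, h1⟩, ⟨-, h2⟩⟩; exact h2 h1

lemma guard_not_img {d : D} (hd : guardAt e d) :
    ¬∃ i : Fin n, d = e.var (xvar i) := fun ⟨i, hi⟩ => hd i hi

lemma leftBin_nn {f' : ℱ} {d : D} (hd : ¬∃ i : Fin n, d = e.var (xvar i)) :
    leftBin e τ₁ f' d d ↔ τ₁ (Atom.bin f' none none) = true := by
  simp only [leftBin]
  rw [dif_neg hd, dif_neg hd]
  simp

lemma leftBin_nx (inj : ∀ i j : Fin n, e.var (xvar i) = e.var (xvar j) → i = j)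
    {f' : ℱ} {d : D} (hd : ¬∃ i : Fin n, d = e.var (xvar i)) (i : Fin n) :
    leftBin e τ₁ f' d (e.var (xvar i)) ↔ τ₁ (Atom.bin f' none (xvar i)) = true := by
  have h₂ : ∃ j : Fin n, e.var (xvar i) = e.var (xvar j) := ⟨i, rfl⟩
  simp only [leftBin]
  rw [dif_neg hd, dif_pos h₂, (inj i _ h₂.choose_spec).symm]

lemma leftBin_xn (inj : ∀ i j : Fin n, e.var (xvar i) = e.var (xvar j) → i = j)
    {f' : ℱ} {d : D} (hd : ¬∃ i : Fin n, d = e.var (xvar i)) (i : Fin n) :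
    leftBin e τ₁ f' (e.var (xvar i)) d ↔ τ₁ (Atom.bin f' (xvar i) none) = true := by
  have h₁ : ∃ j : Fin n, e.var (xvar i) = e.var (xvar j) := ⟨i, rfl⟩
  simp only [leftBin]
  rw [dif_pos h₁, dif_neg hd, (inj i _ h₁.choose_spec).symm]

lemma holds_splitL_mono {ρ : VV n m → D} {a : Atom 𝒜 ℱ (VV n m)} (hne : a.isEq = false) :
    a.holdsAt (splitL e τ₁) ρ → a.holdsAt e ρ := by
  cases a with
  | un A v => exact fun h => h.1
  | bin f' v w => exact fun h => h.1
  | eq v w => simp [Atom.isEq] at hne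

lemma holds_splitR_mono {ρ : VV n m → D} {a : Atom 𝒜 ℱ (VV n m)} (hne : a.isEq = false) :
    a.holdsAt (splitR e τ₁) ρ → a.holdsAt e ρ := by
  cases a with
  | un A v => exact fun h => h.1
  | bin f' v w => exact fun h => h.1
  | eq v w => simp [Atom.isEq] at hne

lemma splitLR_key (inj : ∀ i j : Fin n, e.var (xvar i) = e.var (xvar j) → i = j)
    {d : D} (hd : guardAt e d) {a : Atom 𝒜 ℱ (VV n m)}
    (ha : isExtAtom (XS n m) none a = true) (hne : a.isEq = false) :
    (a.holdsAt (splitL e τ₁) (Function.update e.var none d) ↔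
      (a.holdsAt e (Function.update e.var none d) ∧ τ₁ a = true)) ∧
    (a.holdsAt (splitR e τ₁) (Function.update e.var none d) ↔
      (a.holdsAt e (Function.update e.var none d) ∧ ¬ τ₁ a = true)) := by
  have hd' := guard_not_img hd
  have hρn : Function.update e.var none d none = d := Function.update_self _ _ _
  have hρx : ∀ i : Fin n, Function.update e.var none d (xvar i) = e.var (xvar i) :=
    fun i => Function.update_of_ne (by simp [xvar]) _ _
  rcases extAtom_cases ha with ⟨A, rfl⟩ | ⟨f', rfl⟩ | ⟨f', i, rfl⟩ | ⟨f', i, rfl⟩ |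
    rfl | ⟨i, rfl⟩ | ⟨i, rfl⟩
  · exact ⟨Iff.rfl, Iff.rfl⟩
  · constructor
    · simp only [Atom.holdsAt, hρn, hρx]
      show (e.bin f' d d ∧ leftBin e τ₁ f' d d) ↔ _
      rw [leftBin_nn hd']
    · simp only [Atom.holdsAt, hρn, hρx]
      show (e.bin f' d d ∧ ¬ leftBin e τ₁ f' d d) ↔ _
      rw [leftBin_nn hd']
  · constructor
    · simp only [Atom.holdsAt, hρn, hρx]
      show (e.bin f' d (e.var (xvar i)) ∧ leftBin e τ₁ f' d (e.var (xvar i))) ↔ _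
      rw [leftBin_nx inj hd' i]
    · simp only [Atom.holdsAt, hρn, hρx]
      show (e.bin f' d (e.var (xvar i)) ∧ ¬ leftBin e τ₁ f' d (e.var (xvar i))) ↔ _
      rw [leftBin_nx inj hd' i]
  · constructor
    · simp only [Atom.holdsAt, hρn, hρx]
      show (e.bin f' (e.var (xvar i)) d ∧ leftBin e τ₁ f' (e.var (xvar i)) d) ↔ _
      rw [leftBin_xn inj hd' i]
    · simp only [Atom.holdsAt, hρn, hρx]
      show (e.bin f' (e.var (xvar i)) d ∧ ¬ leftBin e τ₁ f' (e.var (xvar i)) d) ↔ _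
      rw [leftBin_xn inj hd' i]
  · simp [Atom.isEq] at hne
  · simp [Atom.isEq] at hne
  · simp [Atom.isEq] at hne

lemma splitLR_witness
    (h1 : extSignB (XS n m) none τ₁ = true) (h2 : extSignB (XS n m) none τ₂ = true)
    (hmo : MergeOK τ₁ τ₂)
    (inj : ∀ i j : Fin n, e.var (xvar i) = e.var (xvar j) → i = j)
    {d : D} (hd : guardAt e d)
    (hext : extTruth e d (mergeSign τ₁ τ₂)) (hmk : markTruth e d mk12) :
    (extTruth (splitL e τ₁) d τ₁ ∧ markTruth (splitL e τ₁) d mk1) ∧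
    (extTruth (splitR e τ₁) d τ₂ ∧ markTruth (splitR e τ₁) d mk2) := by
  obtain ⟨hτ₁nn, hτ₁x⟩ := extSign_facts h1
  obtain ⟨hτ₂nn, hτ₂x⟩ := extSign_facts h2
  have hρn : Function.update e.var none d none = d := Function.update_self _ _ _
  have hρx : ∀ i : Fin n, Function.update e.var none d (xvar i) = e.var (xvar i) :=
    fun i => Function.update_of_ne (by simp [xvar]) _ _
  have hall : ∀ q : Fin 2, e.un (Sum.inr q) d :=
    fun q => (hmk q).mpr (by fin_cases q <;> decide)
  refine ⟨⟨?_, ?_⟩, ⟨?_, ?_⟩⟩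
  · intro a ha
    simp only [splitL_var]
    rcases isEq_cases a with hne' | ⟨v, w, rfl⟩
    · rw [(splitLR_key inj hd ha hne').1, hext a ha]
      show ((τ₁ a || τ₂ a) = true ∧ τ₁ a = true) ↔ τ₁ a = true
      cases hb : τ₁ a <;> cases hb' : τ₂ a <;> simp
    · rcases extAtom_cases ha with ⟨A, h⟩ | ⟨f', h⟩ | ⟨f', i, h⟩ | ⟨f', i, h⟩ |
        h | ⟨i, h⟩ | ⟨i, h⟩
      · simp at h
      · simp at h
      · simp at h
      · simp at h
      · rw [h]; simp [Atom.holdsAt, hτ₁nn]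
      · rw [h]; simp only [Atom.holdsAt, hρn, hρx, (hτ₁x i).1]
        simp [hd i]
      · rw [h]; simp only [Atom.holdsAt, hρn, hρx, (hτ₁x i).2]
        simp [Ne.symm (hd i)]
  · intro q
    show (e.un (Sum.inr q) d ∧ q = 0) ↔ q ∈ mk1
    constructor
    · rintro ⟨-, rfl⟩; decide
    · intro hq
      exact ⟨hall q, by simpa [mk1] using hq⟩
  · intro a ha
    simp only [splitR_var]
    rcases isEq_cases a with hne' | ⟨v, w, rfl⟩
    · rw [(splitLR_key inj hd ha hne').2, hext a ha]
      show ((τ₁ a || τ₂ a) = true ∧ ¬ τ₁ a = true) ↔ τ₂ a = true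
      have hdisj := hmo a hne'
      cases hb : τ₁ a <;> cases hb' : τ₂ a <;> simp_all
    · rcases extAtom_cases ha with ⟨A, h⟩ | ⟨f', h⟩ | ⟨f', i, h⟩ | ⟨f', i, h⟩ |
        h | ⟨i, h⟩ | ⟨i, h⟩
      · simp at h
      · simp at h
      · simp at h
      · simp at h
      · rw [h]; simp [Atom.holdsAt, hτ₂nn]
      · rw [h]; simp only [Atom.holdsAt, hρn, hρx, (hτ₂x i).1]
        simp [hd i]
      · rw [h]; simp only [Atom.holdsAt, hρn, hρx, (hτ₂x i).2]
        simp [Ne.symm (hd i)]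
  · intro q
    show (e.un (Sum.inr q) d ∧ ¬ q = 0) ↔ q ∈ mk2
    constructor
    · rintro ⟨-, hq⟩
      fin_cases q
      · exact absurd rfl hq
      · decide
    · intro hq
      have hq1 : q = 1 := by simpa [mk2] using hq
      subst hq1
      exact ⟨hall 1, by decide⟩

lemma splitLR_empty
    (inj : ∀ i j : Fin n, e.var (xvar i) = e.var (xvar j) → i = j)
    {d : D} (hd : guardAt e d) (hae : allEmptyAt e d) :
    allEmptyAt (splitL e τ₁) d ∧ allEmptyAt (splitR e τ₁) d := by
  obtain ⟨hx, hm⟩ := hae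
  have hnun : ∀ q : Fin 2, ¬ e.un (Sum.inr q) d := by
    intro q h
    have := (hm q).mp h
    simp at this
  refine ⟨⟨?_, ?_⟩, ⟨?_, ?_⟩⟩
  · intro a ha
    simp only [splitL_var]
    rcases isEq_cases a with hne' | ⟨v, w, rfl⟩
    · rw [(splitLR_key inj hd ha hne').1, hx a ha, emptyExtSign_ne hne']; simp
    · exact hx _ ha
  · intro q
    show (e.un (Sum.inr q) d ∧ q = 0) ↔ q ∈ (∅ : Finset (Fin 2))
    simp only [Finset.notMem_empty, iff_false]
    rintro ⟨h, -⟩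
    exact hnun q h
  · intro a ha
    simp only [splitR_var]
    rcases isEq_cases a with hne' | ⟨v, w, rfl⟩
    · rw [(splitLR_key inj hd ha hne').2, hx a ha, emptyExtSign_ne hne']; simp
    · exact hx _ ha
  · intro q
    show (e.un (Sum.inr q) d ∧ ¬ q = 0) ↔ q ∈ (∅ : Finset (Fin 2))
    simp only [Finset.notMem_empty, iff_false]
    rintro ⟨h, -⟩
    exact hnun q h

lemma splitLR_gccat (hgc : gccatTruth e emptyGSign) :
    gccatTruth (splitL e τ₁) emptyGSign ∧ gccatTruth (splitR e τ₁) emptyGSign := by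
  constructor <;> intro a ha <;> rcases isEq_cases a with hne' | ⟨v, w, rfl⟩
  · constructor
    · intro h; exact (hgc a ha).mp (holds_splitL_mono hne' h)
    · intro h; rw [emptyGSign_ne hne'] at h; simp at h
  · exact hgc _ ha
  · constructor
    · intro h; exact (hgc a ha).mp (holds_splitR_mono hne' h)
    · intro h; rw [emptyGSign_ne hne'] at h; simp at h
  · exact hgc _ ha

lemma split_main (h1 : extSignB (XS n m) none τ₁ = true)
    (h2 : extSignB (XS n m) none τ₂ = true) (hmo : MergeOK τ₁ τ₂)
    (he : AnyBody mk12 (mergeSign τ₁ τ₂) e) :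
    ∃ f g, e.Split f g ∧ AnyBody mk1 τ₁ f ∧ AnyBody mk2 τ₂ g ∧
      {d : D | guardAt f d ∧ extTruth f d τ₁ ∧ markTruth f d mk1} =
        {d : D | guardAt e d ∧ extTruth e d (mergeSign τ₁ τ₂) ∧ markTruth e d mk12} ∧
      {d : D | guardAt g d ∧ extTruth g d τ₂ ∧ markTruth g d mk2} =
        {d : D | guardAt e d ∧ extTruth e d (mergeSign τ₁ τ₂) ∧ markTruth e d mk12} := by
  obtain ⟨hgc, hdi⟩ := he
  have inj : ∀ i j : Fin n, e.var (xvar i) = e.var (xvar j) → i = j :=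
    fun i j h => gccat_inj hgc h
  refine ⟨splitL e τ₁, splitR e τ₁, split_splitLR, ⟨(splitLR_gccat hgc).1, ?_⟩,
    ⟨(splitLR_gccat hgc).2, ?_⟩, ?_, ?_⟩
  · intro d hd
    have hd' : guardAt e d := hd
    rcases hdi d hd' with ⟨hx, hm⟩ | hae
    · exact Or.inl (splitLR_witness h1 h2 hmo inj hd' hx hm).1
    · exact Or.inr (splitLR_empty inj hd' hae).1
  · intro d hd
    have hd' : guardAt e d := hd
    rcases hdi d hd' with ⟨hx, hm⟩ | hae
    · exact Or.inl (splitLR_witness h1 h2 hmo inj hd' hx hm).2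
    · exact Or.inr (splitLR_empty inj hd' hae).2
  · ext d
    simp only [Set.mem_setOf_eq]
    constructor
    · rintro ⟨hd, hx, hm⟩
      have hd' : guardAt e d := hd
      have hB : e.un (Sum.inr 0) d := ((hm 0).mpr (by decide)).1
      rcases hdi d hd' with ⟨hx', hm'⟩ | hae
      · exact ⟨hd', hx', hm'⟩
      · exfalso
        have := (hae.2 0).mp hB
        simp at this
    · rintro ⟨hd, hx, hm⟩
      have hw := (splitLR_witness h1 h2 hmo inj hd hx hm).1
      exact ⟨hd, hw.1, hw.2⟩
  · ext d
    simp only [Set.mem_setOf_eq]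
    constructor
    · rintro ⟨hd, hx, hm⟩
      have hd' : guardAt e d := hd
      have hB : e.un (Sum.inr 1) d := ((hm 1).mpr (by decide)).1
      rcases hdi d hd' with ⟨hx', hm'⟩ | hae
      · exact ⟨hd', hx', hm'⟩
      · exfalso
        have := (hae.2 1).mp hB
        simp at this
    · rintro ⟨hd, hx, hm⟩
      have hw := (splitLR_witness h1 h2 hmo inj hd hx hm).2
      exact ⟨hd, hw.1, hw.2⟩

end SoundnessSplit

/-- **Soundness of the transformation rules.** If `G₁ ⤳ G₂` by
one of the six transformation rules, then `G₂ ⟹ G₁` is valid, i.e. it holds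
in every `L′`-environment over every finite domain. -/
theorem rules_sound {𝒜 ℱ : Type}
    [Fintype 𝒜] [DecidableEq 𝒜] [Fintype ℱ] [DecidableEq ℱ] {n m : ℕ}
    (G₁ G₂ : Multiset (Blk 𝒜 ℱ n m)) (h : Rule G₁ G₂)
    (D : Type) [Finite D] (e : Env (𝒜 ⊕ Fin 2) ℱ (VV n m) D) :
    semM G₂ e → semM G₁ e := by
  intro hsem
  have hmk1 : mk1.Nonempty := ⟨0, by decide⟩
  have hmk2 : mk2.Nonempty := ⟨1, by decide⟩
  rcases h with h14 | h56
  · cases h14 with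
    | r1 τ₁ τ₂ h1 h2 hmo =>
        simp only [Multiset.insert_eq_cons, ← Multiset.cons_zero, semM_cons, semM_zero]
          at hsem ⊢
        obtain ⟨a, r, hsp, hone, hr⟩ := hsem
        obtain ⟨hany, hcard⟩ := sem_oneNum_iff.mp hone
        obtain ⟨f, g, hfg, hf, hg, hWf, hWg⟩ := split_main h1 h2 hmo hany
        obtain ⟨hs1, hs2⟩ := split_rot hsp hfg
        exact ⟨f, unite g r, hs1, sem_oneNum_iff.mpr ⟨hf, by rw [hWf]; exact hcard⟩,
          g, r, hs2, sem_oneNum_iff.mpr ⟨hg, by rw [hWg]; exact hcard⟩, hr⟩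
    | r2 τ₁ τ₂ h1 h2 hmo =>
        simp only [Multiset.insert_eq_cons, ← Multiset.cons_zero, semM_cons, semM_zero]
          at hsem ⊢
        obtain ⟨a, x, hsp, hone, b, r, hx, hb, hr⟩ := hsem
        obtain ⟨hany, hcard⟩ := sem_oneNum_iff.mp hone
        obtain ⟨f, g, hfg, hf, hg, hWf, hWg⟩ := split_main h1 h2 hmo hany
        obtain ⟨hs1, hs2⟩ := split_rot hsp hfg
        obtain ⟨hs3, hs4⟩ := split_assoc hs2 hx
        exact ⟨f, unite g x, hs1, sem_oneNum_iff.mpr ⟨hf, by rw [hWf]; exact hcard⟩,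
          unite g b, r, hs3,
          sem_anyNum_iff.mpr (anyBody_union hs4 hg (sem_anyNum_iff.mp hb) hmk2), hr⟩
    | r3 τ₁ τ₂ h1 h2 hmo =>
        simp only [Multiset.insert_eq_cons, ← Multiset.cons_zero, semM_cons, semM_zero]
          at hsem ⊢
        obtain ⟨a, x, hsp, ha, b, r, hx, hone, hr⟩ := hsem
        obtain ⟨hany, hcard⟩ := sem_oneNum_iff.mp hone
        obtain ⟨f, g, hfg, hf, hg, hWf, hWg⟩ := split_main h1 h2 hmo hany
        obtain ⟨hs1, hs2⟩ := split_rot hx hfg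
        obtain ⟨hs3, hs4⟩ := split_assoc hsp hs1
        exact ⟨unite a f, unite g r, hs3,
          sem_anyNum_iff.mpr (anyBody_union hs4 (sem_anyNum_iff.mp ha) hf hmk1),
          g, r, hs2, sem_oneNum_iff.mpr ⟨hg, by rw [hWg]; exact hcard⟩, hr⟩
    | r4 τ₁ τ₂ h1 h2 hmo =>
        simp only [Multiset.insert_eq_cons, ← Multiset.cons_zero, semM_cons, semM_zero]
          at hsem ⊢
        obtain ⟨a, x1, hsp, ha, b, x2, hx1, hb, c, r, hx2, hc, hr⟩ := hsem
        obtain ⟨f, g, hfg, hf, hg, -, -⟩ := split_main h1 h2 hmo (sem_anyNum_iff.mp hc)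
        obtain ⟨hs1, hs2⟩ := split_rot hx2 hfg
        obtain ⟨hs3, hs4⟩ := split_pull hx1 hs1
        obtain ⟨hs5, hs6⟩ := split_assoc hsp hs3
        obtain ⟨hs7, hs8⟩ := split_assoc hs4 hs2
        exact ⟨unite a f, unite b (unite g r), hs5,
          sem_anyNum_iff.mpr (anyBody_union hs6 (sem_anyNum_iff.mp ha) hf hmk1),
          unite b g, r, hs7,
          sem_anyNum_iff.mpr (anyBody_union hs8 (sem_anyNum_iff.mp hb) hg hmk2), hr⟩
  · cases h56 with
    | r5 τ hτ =>
        simp only [Multiset.insert_eq_cons, ← Multiset.cons_zero, semM_cons, semM_zero]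
          at hsem ⊢
        obtain ⟨a, r, hsp, hemp, hr⟩ := hsem
        exact ⟨a, r, hsp,
          sem_anyNum_iff.mpr ⟨hemp.1, fun d hd => Or.inr (hemp.2 d hd)⟩, hr⟩
    | r6 τ hτ =>
        simp only [Multiset.insert_eq_cons, ← Multiset.cons_zero, semM_cons, semM_zero]
          at hsem ⊢
        obtain ⟨a, r, hsp, hemp, hr⟩ := hsem
        exact ⟨a, r, hsp,
          sem_anyNum_iff.mpr ⟨hemp.1, fun d hd => Or.inr (hemp.2 d hd)⟩, hr⟩
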